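/- arXiv:1204.0062 — 6 statements merged into one kernel-verified Lean document; each statement's English description precedes it below -/
import Mathlib

section
/- Let X be a k×r real matrix (k ≤ r) with full row rank k and suppose every singular value σ_i(X) satisfies √(1−√ε) ≤ σ_i(X) ≤ √(1+√ε) for some 0 < ε < 1/3. Then ‖X⁺ − Xᵀ‖₂ ≤ √ε / √(1−√ε) ≤ 1.54 √ε. -/
open Matrix

/-- Spectral norm (largest singular value) of a real matrix. -/
noncomputable def specNorm {m n : ℕ} (A : Matrix (Fin m) (Fin n) ℝ) : ℝ :=
  ‖LinearMap.toContinuousLinearMap (Matrix.toEuclideanLin A)‖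

/-- `P` satisfies the four Penrose conditions for being the Moore–Penrose
pseudoinverse of `A`. -/
def IsMoorePenrose {m n : ℕ} (A : Matrix (Fin m) (Fin n) ℝ)
    (P : Matrix (Fin n) (Fin m) ℝ) : Prop :=
  A * P * A = A ∧ P * A * P = P ∧ (A * P)ᵀ = A * P ∧ (P * A)ᵀ = P * A

/-- The `i`-th singular value of a `k × r` matrix (`k ≤ r`): the square root of the
`i`-th eigenvalue of `X Xᵀ`. -/
noncomputable def svalRow {k r : ℕ} (X : Matrix (Fin k) (Fin r) ℝ) (i : Fin k) : ℝ :=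
  Real.sqrt ((Matrix.isHermitian_mul_conjTranspose_self X).eigenvalues i)

/-!
With `G = X Xᵀ` invertible, the Penrose conditions force `X⁺ = Xᵀ G⁻¹`, so `M = X⁺ - Xᵀ` satisfies
`Mᵀ M = G + G⁻¹ - 2`. By the functional calculus the spectrum of `Mᵀ M` consists of the values
`λ + λ⁻¹ - 2 = (λ - 1)² / λ` at the eigenvalues `λ = σᵢ²` of `G`, and for `λ ∈ [1 - √ε, 1 + √ε]`
these are at most `ε / (1 - √ε)`.
-/

open scoped MatrixOrder

theorem IsMoorePenrose.eq_transpose_mul_inv {m n : ℕ} {X : Matrix (Fin m) (Fin n) ℝ}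
    {P : Matrix (Fin n) (Fin m) ℝ} (hP : IsMoorePenrose X P) (hX : IsUnit (X * Xᵀ)) :
    P = Xᵀ * (X * Xᵀ)⁻¹ := by
  obtain ⟨hXPX, -, -, hPX⟩ := hP
  have : P * (X * Xᵀ) = Xᵀ := by
    rw [← Matrix.mul_assoc, ← hPX, ← transpose_mul, ← Matrix.mul_assoc, hXPX]
  calc P = P * (X * Xᵀ) * (X * Xᵀ)⁻¹ :=
        (Matrix.mul_nonsing_inv_cancel_right _ _ ((isUnit_iff_isUnit_det _).mp hX)).symm
    _ = Xᵀ * (X * Xᵀ)⁻¹ := by rw [this]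

theorem Matrix.transpose_mul_self_transpose_mul_inv_sub_transpose {R : Type*} [CommRing R]
    {m n : Type*} [Fintype m] [Fintype n] [DecidableEq m] (X : Matrix m n R)
    (hX : IsUnit (X * Xᵀ)) :
    (Xᵀ * (X * Xᵀ)⁻¹ - Xᵀ)ᵀ * (Xᵀ * (X * Xᵀ)⁻¹ - Xᵀ) = X * Xᵀ + (X * Xᵀ)⁻¹ - 2 := by
  have hdet := (isUnit_iff_isUnit_det _).mp hX
  have hsymm : (X * Xᵀ)⁻¹ᵀ = (X * Xᵀ)⁻¹ := by
    rw [transpose_nonsing_inv, transpose_mul, transpose_transpose]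
  have hfactor : Xᵀ * (X * Xᵀ)⁻¹ - Xᵀ = Xᵀ * ((X * Xᵀ)⁻¹ - 1) := by
    rw [Matrix.mul_sub, Matrix.mul_one]
  rw [hfactor, transpose_mul, transpose_transpose, transpose_sub, transpose_one, hsymm,
    Matrix.mul_assoc, ← Matrix.mul_assoc X]
  simp only [Matrix.sub_mul, Matrix.mul_sub, Matrix.one_mul, Matrix.mul_one,
    Matrix.nonsing_inv_mul _ hdet, Matrix.mul_nonsing_inv _ hdet]
  rw [← one_add_one_eq_two]
  abel

theorem Matrix.IsHermitian.add_inv_sub_two_le {𝕜 : Type*} [RCLike 𝕜] {n : Type*} [Fintype n]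
    [DecidableEq n] {A : Matrix n n 𝕜} (hA : A.IsHermitian) (hunit : IsUnit A) {c : ℝ}
    (h : ∀ x ∈ spectrum ℝ A, x + x⁻¹ - 2 ≤ c) : A + A⁻¹ - 2 ≤ algebraMap ℝ _ c := by
  have hinv : ContinuousOn (fun x : ℝ => x⁻¹) (spectrum ℝ A) :=
    continuousOn_inv₀.mono fun x hx (hx0 : x = 0) => spectrum.zero_notMem ℝ hunit (hx0 ▸ hx)
  have hcfc : cfc (fun x : ℝ => x + x⁻¹ - 2) A = A + A⁻¹ - 2 := by
    rw [cfc_sub (fun x : ℝ => x + x⁻¹) _ A (continuousOn_id.add hinv),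
      cfc_add A (fun x : ℝ => x) _ continuousOn_id hinv, cfc_id' ℝ A, cfc_ringInverse_id A hunit,
      cfc_const (2 : ℝ) A, nonsing_inv_eq_ringInverse, map_ofNat]
  rw [← hcfc]
  exact cfc_le_algebraMap _ c A h

theorem specNorm_le_of_transpose_mul_self_le {m n : ℕ} {M : Matrix (Fin m) (Fin n) ℝ} {c : ℝ}
    (hc : 0 ≤ c) (h : Mᵀ * M ≤ algebraMap ℝ _ (c ^ 2)) : specNorm M ≤ c := by
  refine ContinuousLinearMap.opNorm_le_bound _ hc fun v => ?_
  have hquad := (Matrix.le_iff.mp h).dotProduct_mulVec_nonneg v.ofLp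
  rw [star_trivial, sub_mulVec, dotProduct_sub, Algebra.algebraMap_eq_smul_one, smul_mulVec,
    one_mulVec, dotProduct_smul, smul_eq_mul, ← mulVec_mulVec, dotProduct_mulVec,
    vecMul_transpose, sub_nonneg] at hquad
  have hsq : ‖toEuclideanLin M v‖ ^ 2 ≤ (c * ‖v‖) ^ 2 := by
    simp_rw [mul_pow, ← real_inner_self_eq_norm_sq, EuclideanSpace.inner_eq_star_dotProduct,
      star_trivial]
    exact hquad
  exact (pow_le_pow_iff_left₀ (norm_nonneg _) (by positivity) two_ne_zero).mp hsq

theorem add_inv_sub_two_le_of_mem_Icc {s x : ℝ} (hs : s < 1) (hx : x ∈ Set.Icc (1 - s) (1 + s)) :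
    x + x⁻¹ - 2 ≤ (s / √(1 - s)) ^ 2 := by
  obtain ⟨hlo, hhi⟩ := hx
  have hx0 : 0 < x := by linarith
  have hs1 : 0 < 1 - s := by linarith
  have hdev : (x - 1) ^ 2 ≤ s ^ 2 := sq_le_sq' (by linarith) (by linarith)
  calc x + x⁻¹ - 2 = (x - 1) ^ 2 / x := by field_simp; ring
    _ ≤ s ^ 2 / (1 - s) := div_le_div₀ (sq_nonneg s) hdev hs1 hlo
    _ = (s / √(1 - s)) ^ 2 := by rw [div_pow, Real.sq_sqrt hs1.le]

theorem spectrum_mul_transpose_subset_Icc {k r : ℕ} {X : Matrix (Fin k) (Fin r) ℝ} {a b : ℝ}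
    (hb : 0 ≤ b) (hσ : ∀ i, √a ≤ svalRow X i ∧ svalRow X i ≤ √b) :
    spectrum ℝ (X * Xᵀ) ⊆ Set.Icc a b := by
  rintro x hx
  rw [← conjTranspose_eq_transpose_of_trivial,
    (isHermitian_mul_conjTranspose_self X).spectrum_real_eq_range_eigenvalues] at hx
  obtain ⟨i, rfl⟩ := hx
  obtain ⟨hlo, hhi⟩ := hσ i
  exact ⟨(Real.sqrt_le_sqrt_iff (eigenvalues_self_mul_conjTranspose_nonneg X i)).mp hlo,
    (Real.sqrt_le_sqrt_iff hb).mp hhi⟩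

theorem IsMoorePenrose.specNorm_sub_transpose_le {m n : ℕ} {X : Matrix (Fin m) (Fin n) ℝ}
    {P : Matrix (Fin n) (Fin m) ℝ} (hP : IsMoorePenrose X P) {s : ℝ} (hs0 : 0 ≤ s) (hs : s < 1)
    (hspec : spectrum ℝ (X * Xᵀ) ⊆ Set.Icc (1 - s) (1 + s)) :
    specNorm (P - Xᵀ) ≤ s / √(1 - s) := by
  have hG : (X * Xᵀ).IsHermitian := by
    simpa using isHermitian_mul_conjTranspose_self X
  have hunit : IsUnit (X * Xᵀ) :=
    spectrum.isUnit_of_zero_notMem ℝ fun h0 => by linarith [(hspec h0).1]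
  apply specNorm_le_of_transpose_mul_self_le (by positivity)
  rw [hP.eq_transpose_mul_inv hunit, transpose_mul_self_transpose_mul_inv_sub_transpose X hunit]
  exact hG.add_inv_sub_two_le hunit fun x hx => add_inv_sub_two_le_of_mem_Icc hs (hspec hx)

theorem sqrt_div_sqrt_one_sub_sqrt_le {ε : ℝ} (hε : ε < 1 / 3) :
    √ε / √(1 - √ε) ≤ 1.54 * √ε := by
  -- `√(1/3) < 0.5774`, `0.65² < 1 - 0.5774` and `1 / 0.65 < 1.54`
  have hs : √ε < 0.5774 := (Real.sqrt_lt' (by norm_num)).mpr (by linarith)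
  have hroot : (0.65 : ℝ) ≤ √(1 - √ε) := Real.le_sqrt_of_sq_le (by linarith)
  calc √ε / √(1 - √ε) ≤ √ε / 0.65 :=
        div_le_div_of_nonneg_left (Real.sqrt_nonneg ε) (by norm_num) hroot
    _ = (1 / 0.65) * √ε := by ring
    _ ≤ 1.54 * √ε := by gcongr; norm_num

theorem pinv_sub_transpose_bound_general {k r : ℕ}
    (X : Matrix (Fin k) (Fin r) ℝ) (ε : ℝ) (hε' : ε < 1/3)
    (hσ : ∀ i, Real.sqrt (1 - Real.sqrt ε) ≤ svalRow X i ∧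
               svalRow X i ≤ Real.sqrt (1 + Real.sqrt ε))
    (P : Matrix (Fin r) (Fin k) ℝ) (hP : IsMoorePenrose X P) :
    specNorm (P - Xᵀ) ≤ Real.sqrt ε / Real.sqrt (1 - Real.sqrt ε) ∧
    Real.sqrt ε / Real.sqrt (1 - Real.sqrt ε) ≤ 1.54 * Real.sqrt ε := by
  have hs1 : √ε < 1 := (Real.sqrt_lt' one_pos).mpr (by linarith)
  have hspec := spectrum_mul_transpose_subset_Icc (by linarith [Real.sqrt_nonneg ε]) hσ
  exact ⟨hP.specNorm_sub_transpose_le (Real.sqrt_nonneg ε) hs1 hspec,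
    sqrt_div_sqrt_one_sub_sqrt_le hε'⟩

/-- If `X` has full row rank and all its singular values lie in
`[√(1−√ε), √(1+√ε)]` for some `0 < ε < 1/3`, then
`‖X⁺ − Xᵀ‖₂ ≤ √ε/√(1−√ε) ≤ 1.54 √ε`. -/
theorem pinv_sub_transpose_bound {k r : ℕ} (hkr : k ≤ r)
    (X : Matrix (Fin k) (Fin r) ℝ) (ε : ℝ) (hε : 0 < ε) (hε' : ε < 1/3)
    (hrank : X.rank = k)
    (hσ : ∀ i, Real.sqrt (1 - Real.sqrt ε) ≤ svalRow X i ∧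
               svalRow X i ≤ Real.sqrt (1 + Real.sqrt ε))
    (P : Matrix (Fin r) (Fin k) ℝ) (hP : IsMoorePenrose X P) :
    specNorm (P - Xᵀ) ≤ Real.sqrt ε / Real.sqrt (1 - Real.sqrt ε) ∧
    Real.sqrt ε / Real.sqrt (1 - Real.sqrt ε) ≤ 1.54 * Real.sqrt ε :=
  pinv_sub_transpose_bound_general X ε hε' hσ P hP
end

section
/- Let A ∈ ℝ^{m×n} have rank ρ with SVD A = U Σ Vᵀ, and fix k with 0 ≤ k ≤ ρ. Let Ω ∈ ℝ^{n×r} with r ≥ k, and set Y = A Ω. Write V_k for the first k right singular vectors and V_{ρ−k}, Σ_{ρ−k} for the remaining ones. If V_kᵀ Ω has full row rank k, then for ξ ∈ {2, F}: ‖A − Y Y⁺ A‖_ξ² ≤ ‖A − A_k‖_ξ² + ‖Σ_{ρ−k} V_{ρ−k}ᵀ Ω (V_kᵀ Ω)⁺‖_ξ². -/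
open Matrix

/-- Frobenius norm of a real matrix. -/
noncomputable def frobNorm {m n : ℕ} (A : Matrix (Fin m) (Fin n) ℝ) : ℝ :=
  Real.sqrt (∑ i, ∑ j, (A i j) ^ 2)

section Aux

open scoped Matrix.Norms.L2Operator

lemma specNorm_eq {m n : ℕ} (A : Matrix (Fin m) (Fin n) ℝ) : specNorm A = ‖A‖ := rfl

lemma real_conjTranspose {m n : ℕ} (A : Matrix (Fin m) (Fin n) ℝ) : Aᴴ = Aᵀ := by
  ext i j; simp [Matrix.conjTranspose_apply]

lemma spec_transpose {m n : ℕ} (A : Matrix (Fin m) (Fin n) ℝ) : ‖Aᵀ‖ = ‖A‖ := by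
  rw [← real_conjTranspose]; exact Matrix.l2_opNorm_conjTranspose A

lemma spec_mul_transpose_self {m n : ℕ} (A : Matrix (Fin m) (Fin n) ℝ) :
    ‖A * Aᵀ‖ = ‖A‖ ^ 2 := by
  have := Matrix.l2_opNorm_conjTranspose_mul_self Aᵀ
  rw [real_conjTranspose, Matrix.transpose_transpose, spec_transpose] at this
  rw [this, sq]

/-- Left multiplication by a matrix with orthonormal columns preserves the spectral norm. -/
lemma spec_iso {m n p : ℕ} (U : Matrix (Fin m) (Fin p) ℝ) (hU : Uᵀ * U = 1)
    (M : Matrix (Fin p) (Fin n) ℝ) : ‖U * M‖ = ‖M‖ := by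
  have h3 : ‖(U * M)ᵀ * (U * M)‖ = ‖U * M‖ ^ 2 := by
    have := Matrix.l2_opNorm_conjTranspose_mul_self (U * M)
    rw [real_conjTranspose] at this; rw [this, sq]
  have h4 : (U * M)ᵀ * (U * M) = Mᵀ * M := by
    rw [Matrix.transpose_mul, Matrix.mul_assoc, ← Matrix.mul_assoc Uᵀ U M, hU, Matrix.one_mul]
  have h5 : ‖Mᵀ * M‖ = ‖M‖ ^ 2 := by
    have := Matrix.l2_opNorm_conjTranspose_mul_self M
    rw [real_conjTranspose] at this; rw [this, sq]
  have h6 : ‖U * M‖ ^ 2 = ‖M‖ ^ 2 := by rw [← h3, h4, h5]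
  rw [← Real.sqrt_sq (norm_nonneg (U * M)), ← Real.sqrt_sq (norm_nonneg M), h6]

/-- An orthogonal projection has spectral norm at most 1. -/
lemma spec_proj_le_one {m : ℕ} (E : Matrix (Fin m) (Fin m) ℝ)
    (hE2 : E * E = E) (hEt : Eᵀ = E) : ‖E‖ ≤ 1 := by
  have h : ‖E‖ ^ 2 = ‖E‖ := by
    rw [← spec_mul_transpose_self, hEt, hE2]
  nlinarith [norm_nonneg E]

lemma spec_proj_mul_le {m n : ℕ} (E : Matrix (Fin m) (Fin m) ℝ)
    (hE2 : E * E = E) (hEt : Eᵀ = E) (C : Matrix (Fin m) (Fin n) ℝ) :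
    ‖E * C‖ ≤ ‖C‖ := by
  calc ‖E * C‖ ≤ ‖E‖ * ‖C‖ := Matrix.l2_opNorm_mul E C
    _ ≤ 1 * ‖C‖ := by
        have := spec_proj_le_one E hE2 hEt
        have := norm_nonneg C
        nlinarith
    _ = ‖C‖ := one_mul _

/-- Squared Frobenius norm as a trace. -/
lemma frobSq_eq_trace {m n : ℕ} (B : Matrix (Fin m) (Fin n) ℝ) :
    frobNorm B ^ 2 = Matrix.trace (Bᵀ * B) := by
  rw [frobNorm, Real.sq_sqrt (by positivity), Matrix.trace]
  simp only [Matrix.diag_apply, Matrix.mul_apply, Matrix.transpose_apply]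
  rw [Finset.sum_comm]
  simp [sq]

lemma traceSq_nonneg {m n : ℕ} (B : Matrix (Fin m) (Fin n) ℝ) :
    0 ≤ Matrix.trace (Bᵀ * B) := by
  rw [← frobSq_eq_trace]; positivity

lemma frobNorm_nonneg {m n : ℕ} (B : Matrix (Fin m) (Fin n) ℝ) : 0 ≤ frobNorm B :=
  Real.sqrt_nonneg _

lemma frob_iso {m n p : ℕ} (U : Matrix (Fin m) (Fin p) ℝ) (hU : Uᵀ * U = 1)
    (M : Matrix (Fin p) (Fin n) ℝ) : frobNorm (U * M) ^ 2 = frobNorm M ^ 2 := by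
  rw [frobSq_eq_trace, frobSq_eq_trace, Matrix.transpose_mul, Matrix.mul_assoc,
    ← Matrix.mul_assoc Uᵀ U M, hU, Matrix.one_mul]

lemma frob_proj_mul_le {m n : ℕ} (E : Matrix (Fin m) (Fin m) ℝ)
    (hE2 : E * E = E) (hEt : Eᵀ = E) (C : Matrix (Fin m) (Fin n) ℝ) :
    frobNorm (E * C) ^ 2 ≤ frobNorm C ^ 2 := by
  rw [frobSq_eq_trace, frobSq_eq_trace]
  have h1 : (E * C)ᵀ * (E * C) = Cᵀ * (E * C) := by
    rw [Matrix.transpose_mul, hEt, Matrix.mul_assoc, ← Matrix.mul_assoc E E C, hE2]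
  have hF : Matrix.trace (Cᵀ * C) - Matrix.trace ((E * C)ᵀ * (E * C)) =
      Matrix.trace (((1 - E) * C)ᵀ * ((1 - E) * C)) := by
    rw [h1]
    have : ((1 - E) * C)ᵀ * ((1 - E) * C) = Cᵀ * ((1 - E) * C) := by
      have hEt' : (1 - E : Matrix (Fin m) (Fin m) ℝ)ᵀ = 1 - E := by
        rw [Matrix.transpose_sub, Matrix.transpose_one, hEt]
      have hE2' : (1 - E) * (1 - E) = (1 - E : Matrix (Fin m) (Fin m) ℝ) := by
        noncomm_ring [hE2]
      rw [Matrix.transpose_mul, hEt', Matrix.mul_assoc, ← Matrix.mul_assoc (1 - E) (1 - E) C,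
        hE2']
    rw [this]
    simp only [Matrix.sub_mul, Matrix.mul_sub, Matrix.one_mul]
    rw [Matrix.trace_sub]
  have := traceSq_nonneg ((1 - E) * C)
  linarith
end Aux

lemma MMt_decomp {p n k : ℕ} (N : Matrix (Fin p) (Fin n) ℝ) (W : Matrix (Fin p) (Fin k) ℝ)
    (Vk : Matrix (Fin n) (Fin k) ℝ) (hVk : Vkᵀ * Vk = 1) (hNVk : N * Vk = 0) :
    (N - W * Vkᵀ) * (N - W * Vkᵀ)ᵀ = N * Nᵀ + W * Wᵀ := by
  have h1 : N * (Vk * Wᵀ) = 0 := by rw [← Matrix.mul_assoc, hNVk, Matrix.zero_mul]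
  have h2 : W * Vkᵀ * Nᵀ = 0 := by
    have h := congrArg Matrix.transpose h1
    rwa [Matrix.transpose_mul, Matrix.transpose_mul, Matrix.transpose_transpose,
      Matrix.transpose_zero] at h
  have h3 : W * Vkᵀ * (Vk * Wᵀ) = W * Wᵀ := by
    rw [Matrix.mul_assoc W Vkᵀ (Vk * Wᵀ), ← Matrix.mul_assoc Vkᵀ Vk Wᵀ, hVk, Matrix.one_mul]
  rw [Matrix.transpose_sub, Matrix.transpose_mul, Matrix.transpose_transpose,
    Matrix.sub_mul, Matrix.mul_sub, Matrix.mul_sub, h1, h2, h3]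
  abel


open scoped Matrix.Norms.L2Operator

/-- Structural residual-error bound for projection-based low-rank approximation:
given an SVD `A = U_k Σ_k V_kᵀ + U_{ρ−k} Σ_{ρ−k} V_{ρ−k}ᵀ` partitioned at `k`,
`Y = A Ω`, and `V_kᵀ Ω` of full row rank, for both the spectral and Frobenius
norms, `‖A − Y Y⁺ A‖² ≤ ‖A − A_k‖² + ‖Σ_{ρ−k} V_{ρ−k}ᵀ Ω (V_kᵀ Ω)⁺‖²`. -/
theorem structural_residual_bound {m n r k ρk : ℕ}
    (A : Matrix (Fin m) (Fin n) ℝ)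
    (Uk : Matrix (Fin m) (Fin k) ℝ) (Ur : Matrix (Fin m) (Fin ρk) ℝ)
    (Vk : Matrix (Fin n) (Fin k) ℝ) (Vr : Matrix (Fin n) (Fin ρk) ℝ)
    (σk : Fin k → ℝ) (σr : Fin ρk → ℝ)
    (hA : A = Uk * Matrix.diagonal σk * Vkᵀ + Ur * Matrix.diagonal σr * Vrᵀ)
    (hUk : Ukᵀ * Uk = 1) (hUr : Urᵀ * Ur = 1) (hUkr : Ukᵀ * Ur = 0)
    (hVk : Vkᵀ * Vk = 1) (hVr : Vrᵀ * Vr = 1) (hVkr : Vkᵀ * Vr = 0)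
    (hσk : ∀ i, 0 < σk i) (hσr : ∀ i, 0 < σr i)
    (hord : ∀ i j, σr j ≤ σk i)
    (hrank : A.rank = k + ρk)
    (Ω : Matrix (Fin n) (Fin r) ℝ) (hkr : k ≤ r)
    (hfull : (Vkᵀ * Ω).rank = k)
    (Py : Matrix (Fin r) (Fin m) ℝ) (hPy : IsMoorePenrose (A * Ω) Py)
    (Q : Matrix (Fin r) (Fin k) ℝ) (hQ : IsMoorePenrose (Vkᵀ * Ω) Q) :
    specNorm (A - (A * Ω) * Py * A) ^ 2 ≤
      specNorm (A - Uk * Matrix.diagonal σk * Vkᵀ) ^ 2 +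
      specNorm (Matrix.diagonal σr * Vrᵀ * Ω * Q) ^ 2 ∧
    frobNorm (A - (A * Ω) * Py * A) ^ 2 ≤
      frobNorm (A - Uk * Matrix.diagonal σk * Vkᵀ) ^ 2 +
      frobNorm (Matrix.diagonal σr * Vrᵀ * Ω * Q) ^ 2 := by
  
  -- notation
  set Dk := Matrix.diagonal σk with hDk
  set Dr := Matrix.diagonal σr with hDr
  set N := Dr * Vrᵀ with hN
  set W := Dr * Vrᵀ * Ω * Q with hW
  set P := A * Ω * Py with hP
  set M := N - W * Vkᵀ with hM
  -- Step 0 : (Vkᵀ Ω) Q = 1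
  have hBQ : (Vkᵀ * Ω) * Q = 1 := by
    set B := Vkᵀ * Ω with hB
    have hsurj : Function.Surjective B.mulVecLin := by
      rw [← LinearMap.range_eq_top]
      apply Submodule.eq_top_of_finrank_eq
      rw [← Matrix.rank, hfull, Module.finrank_fin_fun]
    have hzero : ∀ v, (B * Q - 1) *ᵥ (B *ᵥ v) = 0 := by
      intro v
      rw [Matrix.mulVec_mulVec, Matrix.sub_mul, hQ.1, Matrix.one_mul, sub_self,
        Matrix.zero_mulVec]
    have hzero' : ∀ w, (B * Q - 1) *ᵥ w = 0 := by
      intro w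
      obtain ⟨v, hv⟩ := hsurj w
      rw [← hv, Matrix.mulVecLin_apply, hzero]
    have h0 : B * Q - 1 = 0 := by
      ext i j
      have := congr_fun (hzero' (Pi.single j 1)) i
      rwa [Matrix.mulVec_single_one] at this
    rwa [sub_eq_zero] at h0
  -- Step 1 : properties of P
  have hPY : P * (A * Ω) = A * Ω := by
    rw [hP]; exact hPy.1
  have hP2 : P * P = P := by
    rw [hP, ← Matrix.mul_assoc (A * Ω * Py) (A * Ω) Py, hPy.1]
  have hPt : Pᵀ = P := hPy.2.2.1
  -- Step 2 : key projection identity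
  have key : A - A * Ω * Py * A = (1 - P) * (A - (A * Ω) * (Q * Vkᵀ)) := by
    have h1 : P * ((A * Ω) * (Q * Vkᵀ)) = (A * Ω) * (Q * Vkᵀ) := by
      rw [← Matrix.mul_assoc, hPY]
    rw [Matrix.sub_mul, Matrix.one_mul, Matrix.mul_sub, h1]
    have : P * A = A * Ω * Py * A := rfl
    rw [this]
    abel
  -- Step 3 : the residual target
  have hBQ' : Vkᵀ * (Ω * (Q * Vkᵀ)) = Vkᵀ := by
    rw [← Matrix.mul_assoc, ← Matrix.mul_assoc, hBQ, Matrix.one_mul]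
  have e1 : (A * Ω) * (Q * Vkᵀ) = Uk * Dk * Vkᵀ + Ur * (W * Vkᵀ) := by
    rw [hA, hW]
    simp only [Matrix.add_mul, Matrix.mul_assoc, hBQ']
  have identity2 : A - (A * Ω) * (Q * Vkᵀ) = Ur * M := by
    rw [e1, hA, hM, hN, Matrix.mul_sub]
    simp only [Matrix.mul_assoc]
    abel
  -- Step 4 : M * Mᵀ = N * Nᵀ + W * Wᵀ
  have hVrk : Vrᵀ * Vk = 0 := by
    have := congrArg Matrix.transpose hVkr
    rwa [Matrix.transpose_mul, Matrix.transpose_transpose, Matrix.transpose_zero] at this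
  have hNVk : N * Vk = 0 := by
    rw [hN, Matrix.mul_assoc, hVrk, Matrix.mul_zero]
  have hMMt : M * Mᵀ = N * Nᵀ + W * Wᵀ := MMt_decomp N W Vk hVk hNVk
  -- residual of the best rank-k approximation
  have hAk : A - Uk * Dk * Vkᵀ = Ur * N := by
    rw [hA, hN, ← Matrix.mul_assoc]
    abel
  -- projection facts for E = 1 - P
  have hE2 : (1 - P) * (1 - P) = 1 - P := by
    noncomm_ring [hP2]
  have hEt : (1 - P)ᵀ = 1 - P := by
    rw [Matrix.transpose_sub, Matrix.transpose_one, hPt]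
  constructor
  · -- spectral norm bound
    have s1 : specNorm (A - A * Ω * Py * A) ≤ ‖M‖ := by
      rw [specNorm_eq, key, identity2]
      calc ‖(1 - P) * (Ur * M)‖ ≤ ‖Ur * M‖ := spec_proj_mul_le _ hE2 hEt _
        _ = ‖M‖ := spec_iso Ur hUr M
    have s2 : ‖M‖ ^ 2 ≤ ‖N‖ ^ 2 + ‖W‖ ^ 2 := by
      rw [← spec_mul_transpose_self M, hMMt]
      calc ‖N * Nᵀ + W * Wᵀ‖ ≤ ‖N * Nᵀ‖ + ‖W * Wᵀ‖ := norm_add_le _ _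
        _ = ‖N‖ ^ 2 + ‖W‖ ^ 2 := by
            rw [spec_mul_transpose_self, spec_mul_transpose_self]
    have hRHS1 : specNorm (A - Uk * Matrix.diagonal σk * Vkᵀ) = ‖N‖ := by
      rw [specNorm_eq, ← hDk, hAk]
      exact spec_iso Ur hUr N
    have hRHS2 : specNorm (Matrix.diagonal σr * Vrᵀ * Ω * Q) = ‖W‖ := by
      rw [specNorm_eq, ← hDr, ← hW]
    rw [hRHS1, hRHS2]
    have h0 : 0 ≤ specNorm (A - A * Ω * Py * A) := by
      rw [specNorm_eq]; exact norm_nonneg _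
    calc specNorm (A - A * Ω * Py * A) ^ 2 ≤ ‖M‖ ^ 2 := by
          apply pow_le_pow_left₀ h0 s1
      _ ≤ ‖N‖ ^ 2 + ‖W‖ ^ 2 := s2
  · -- Frobenius norm bound
    have f1 : frobNorm (A - A * Ω * Py * A) ^ 2 ≤ frobNorm M ^ 2 := by
      rw [key, identity2]
      calc frobNorm ((1 - P) * (Ur * M)) ^ 2 ≤ frobNorm (Ur * M) ^ 2 :=
            frob_proj_mul_le _ hE2 hEt _
        _ = frobNorm M ^ 2 := frob_iso Ur hUr M
    have f2 : frobNorm M ^ 2 = frobNorm N ^ 2 + frobNorm W ^ 2 := by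
      rw [frobSq_eq_trace, Matrix.trace_mul_comm, hMMt, Matrix.trace_add,
        frobSq_eq_trace, frobSq_eq_trace, Matrix.trace_mul_comm Nᵀ N,
        Matrix.trace_mul_comm Wᵀ W]
    have hRHS1 : frobNorm (A - Uk * Matrix.diagonal σk * Vkᵀ) ^ 2 = frobNorm N ^ 2 := by
      rw [← hDk, hAk]; exact frob_iso Ur hUr N
    have hRHS2 : frobNorm (Matrix.diagonal σr * Vrᵀ * Ω * Q) = frobNorm W := by
      rw [← hDr, ← hW]
    rw [hRHS1, hRHS2]
    calc frobNorm (A - A * Ω * Py * A) ^ 2 ≤ frobNorm M ^ 2 := f1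
      _ = frobNorm N ^ 2 + frobNorm W ^ 2 := f2
end

section
/- Let A ∈ ℝ^{m×n} with m ≥ n have rank ρ = n and let b ∈ ℝ^m. Let U ∈ ℝ^{m×ρ} contain the left singular vectors of A, and let Ω ∈ ℝ^{m×r} (ρ ≤ r ≤ m) satisfy rank(Ωᵀ U) = rank(U) = ρ. Set x_opt = A⁺ b and x̃_opt = (Ωᵀ A)⁺ Ωᵀ b. Then ‖A x̃_opt − b‖₂² ≤ ‖A x_opt − b‖₂² + ‖(Ωᵀ U)⁺ Ωᵀ (A x_opt − b)‖₂². -/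
open Matrix

/-- Euclidean norm of a vector in `ℝ^n`. -/
noncomputable def vnorm {n : ℕ} (v : Fin n → ℝ) : ℝ :=
  Real.sqrt (∑ i, (v i) ^ 2)

/-- The Moore–Penrose pseudoinverse is unique. -/
lemma mp_unique {m n : ℕ} {A : Matrix (Fin m) (Fin n) ℝ}
    {P Q : Matrix (Fin n) (Fin m) ℝ}
    (hP : IsMoorePenrose A P) (hQ : IsMoorePenrose A Q) : P = Q := by
  obtain ⟨hP1, hP2, hP3, hP4⟩ := hP
  obtain ⟨hQ1, hQ2, hQ3, hQ4⟩ := hQ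
  have hAP : A * P = A * Q := by
    calc A * P = (A * Q * A) * P := by rw [hQ1]
    _ = (A * Q) * (A * P) := by rw [Matrix.mul_assoc]
    _ = (A * Q)ᵀ * (A * P)ᵀ := by rw [hQ3, hP3]
    _ = Qᵀ * (Aᵀ * (Pᵀ * Aᵀ)) := by
        simp only [Matrix.transpose_mul, Matrix.mul_assoc]
    _ = Qᵀ * (A * P * A)ᵀ := by
        simp only [Matrix.transpose_mul, Matrix.mul_assoc]
    _ = Qᵀ * Aᵀ := by rw [hP1]
    _ = (A * Q)ᵀ := by rw [Matrix.transpose_mul]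
    _ = A * Q := hQ3
  have hPA : P * A = Q * A := by
    calc P * A = P * (A * Q * A) := by rw [hQ1]
    _ = (P * A) * (Q * A) := by simp only [Matrix.mul_assoc]
    _ = (P * A)ᵀ * (Q * A)ᵀ := by rw [hP4, hQ4]
    _ = Aᵀ * (Pᵀ * (Aᵀ * Qᵀ)) := by
        simp only [Matrix.transpose_mul, Matrix.mul_assoc]
    _ = (A * P * A)ᵀ * Qᵀ := by
        simp only [Matrix.transpose_mul, Matrix.mul_assoc]
    _ = Aᵀ * Qᵀ := by rw [hP1]
    _ = (Q * A)ᵀ := by rw [Matrix.transpose_mul]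
    _ = Q * A := hQ4
  calc P = P * A * P := hP2.symm
  _ = P * (A * Q) := by rw [Matrix.mul_assoc, hAP]
  _ = (P * A) * Q := by rw [Matrix.mul_assoc]
  _ = (Q * A) * Q := by rw [hPA]
  _ = Q := hQ2

/-- If `W` has full column rank, the pseudoinverse is a left inverse. -/
lemma mp_left_inverse {r n : ℕ} {W : Matrix (Fin r) (Fin n) ℝ}
    {P : Matrix (Fin n) (Fin r) ℝ}
    (h : IsMoorePenrose W P) (hrank : W.rank = n) : P * W = 1 := by
  obtain ⟨h1, h2, h3, h4⟩ := h
  set M := P * W with hM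
  have hidem : M * M = M := by
    calc M * M = (P * W * P) * W := by simp only [hM, Matrix.mul_assoc]
    _ = M := by rw [h2]
  have hrk : M.rank = n := by
    refine le_antisymm (M.rank_le_width) ?_
    have : W.rank ≤ M.rank := by
      calc W.rank = (W * M).rank := by
            rw [hM, ← Matrix.mul_assoc, h1]
      _ ≤ M.rank := Matrix.rank_mul_le_right _ _
    omega
  -- surjectivity of mulVec M
  have hsurj : Function.Surjective M.mulVec := by
    have htop : LinearMap.range M.mulVecLin = ⊤ := by
      apply Submodule.eq_top_of_finrank_eq
      rw [Module.finrank_fintype_fun_eq_card]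
      simpa [Matrix.rank] using hrk
    intro y
    obtain ⟨x, hx⟩ := LinearMap.range_eq_top.mp htop y
    exact ⟨x, hx⟩
  have hfix : ∀ y, M.mulVec y = y := by
    intro y
    obtain ⟨x, hx⟩ := hsurj y
    rw [← hx, Matrix.mulVec_mulVec, hidem]
  ext i j
  have := congrFun (hfix (Pi.single j 1)) i
  simpa [Matrix.one_apply, Pi.single_apply, eq_comm] using this

/-- Structural bound for sketched least squares: with `x_opt = A⁺ b` and
`x̃_opt = (Ωᵀ A)⁺ Ωᵀ b`,
`‖A x̃_opt − b‖² ≤ ‖A x_opt − b‖² + ‖(Ωᵀ U)⁺ Ωᵀ (A x_opt − b)‖²`. -/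
theorem sketched_least_squares_bound {m n r : ℕ} (hnm : n ≤ m)
    (A : Matrix (Fin m) (Fin n) ℝ) (b : Fin m → ℝ)
    (hrank : A.rank = n)
    (U : Matrix (Fin m) (Fin n) ℝ) (V : Matrix (Fin n) (Fin n) ℝ) (σ : Fin n → ℝ)
    (hU : Uᵀ * U = 1) (hV : Vᵀ * V = 1) (hσ : ∀ i, 0 < σ i)
    (hA : A = U * Matrix.diagonal σ * Vᵀ)
    (Ω : Matrix (Fin m) (Fin r) ℝ) (hnr : n ≤ r) (hrm : r ≤ m)
    (hΩ : (Ωᵀ * U).rank = n)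
    (PA : Matrix (Fin n) (Fin m) ℝ) (hPA : IsMoorePenrose A PA)
    (PΩA : Matrix (Fin n) (Fin r) ℝ) (hPΩA : IsMoorePenrose (Ωᵀ * A) PΩA)
    (PΩU : Matrix (Fin n) (Fin r) ℝ) (hPΩU : IsMoorePenrose (Ωᵀ * U) PΩU) :
    vnorm (A.mulVec (PΩA.mulVec (Ωᵀ.mulVec b)) - b) ^ 2 ≤
      vnorm (A.mulVec (PA.mulVec b) - b) ^ 2 +
      vnorm ((PΩU * Ωᵀ).mulVec (A.mulVec (PA.mulVec b) - b)) ^ 2 := by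
  -- notation
  set Sgm := Matrix.diagonal σ with hSgm
  set Sgi := Matrix.diagonal (fun i => (σ i)⁻¹) with hSgi
  set W := Ωᵀ * U with hW
  have hσne : ∀ i, σ i ≠ 0 := fun i => (hσ i).ne'
  have hSgSgi : Sgm * Sgi = 1 := by
    rw [hSgm, hSgi, Matrix.diagonal_mul_diagonal]
    rw [show (fun i => σ i * (σ i)⁻¹) = fun _ => (1:ℝ) from funext fun i => mul_inv_cancel₀ (hσne i)]
    exact Matrix.diagonal_one
  have hSgiSg : Sgi * Sgm = 1 := by
    rw [hSgi, hSgm, Matrix.diagonal_mul_diagonal]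
    rw [show (fun i => (σ i)⁻¹ * σ i) = fun _ => (1:ℝ) from funext fun i => inv_mul_cancel₀ (hσne i)]
    exact Matrix.diagonal_one
  have hVV : V * Vᵀ = 1 := mul_eq_one_comm.mp hV
  -- cancel lemmas (right-associated)
  have cU : ∀ {k} (X : Matrix (Fin n) (Fin k) ℝ), Uᵀ * (U * X) = X := by
    intro k X; rw [← Matrix.mul_assoc, hU, Matrix.one_mul]
  have cV : ∀ {k} (X : Matrix (Fin n) (Fin k) ℝ), Vᵀ * (V * X) = X := by
    intro k X; rw [← Matrix.mul_assoc, hV, Matrix.one_mul]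
  have cSg : ∀ {k} (X : Matrix (Fin n) (Fin k) ℝ), Sgm * (Sgi * X) = X := by
    intro k X; rw [← Matrix.mul_assoc, hSgSgi, Matrix.one_mul]
  have cSg' : ∀ {k} (X : Matrix (Fin n) (Fin k) ℝ), Sgi * (Sgm * X) = X := by
    intro k X; rw [← Matrix.mul_assoc, hSgiSg, Matrix.one_mul]
  -- explicit pseudoinverse of A
  have hQA : IsMoorePenrose A (V * Sgi * Uᵀ) := by
    have hAQ : A * (V * Sgi * Uᵀ) = U * Uᵀ := by
      rw [hA]; simp only [Matrix.mul_assoc]; rw [cV, cSg]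
    have hQA' : (V * Sgi * Uᵀ) * A = 1 := by
      rw [hA]; simp only [Matrix.mul_assoc]; rw [cU, cSg']
      exact hVV
    refine ⟨?_, ?_, ?_, ?_⟩
    · rw [hAQ, hA]; simp only [Matrix.mul_assoc]; rw [cU]
    · rw [hQA', Matrix.one_mul]
    · rw [hAQ, Matrix.transpose_mul, Matrix.transpose_transpose]
    · rw [hQA', Matrix.transpose_one]
  have hPAeq : PA = V * Sgi * Uᵀ := mp_unique hPA hQA
  -- left inverse property for PΩU
  have hPW : PΩU * W = 1 := mp_left_inverse hPΩU hΩ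
  have cP : ∀ {k} (X : Matrix (Fin n) (Fin k) ℝ), PΩU * (W * X) = X := by
    intro k X; rw [← Matrix.mul_assoc, hPW, Matrix.one_mul]
  -- Ωᵀ * A = W * Sgm * Vᵀ
  have hB : Ωᵀ * A = W * Sgm * Vᵀ := by
    rw [hA, hW]; simp only [Matrix.mul_assoc]
  -- explicit pseudoinverse of Ωᵀ A
  have hQB : IsMoorePenrose (Ωᵀ * A) (V * Sgi * PΩU) := by
    obtain ⟨u1, u2, u3, u4⟩ := hPΩU
    have hBQ : (Ωᵀ * A) * (V * Sgi * PΩU) = W * PΩU := by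
      rw [hB]; simp only [Matrix.mul_assoc]; rw [cV, cSg]
    have hQB' : (V * Sgi * PΩU) * (Ωᵀ * A) = 1 := by
      rw [hB]; simp only [Matrix.mul_assoc]; rw [cP, cSg']
      exact hVV
    refine ⟨?_, ?_, ?_, ?_⟩
    · rw [hBQ, hB]; simp only [Matrix.mul_assoc]
      rw [cP]
    · rw [hQB', Matrix.one_mul]
    · rw [hBQ]; exact u3
    · rw [hQB', Matrix.transpose_one]
  have hPBeq : PΩA = V * Sgi * PΩU := mp_unique hPΩA hQB
  -- the two key matrix identities
  have key1 : A * PA = U * Uᵀ := by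
    rw [hPAeq, hA]; simp only [Matrix.mul_assoc]; rw [cV, cSg]
  have key2 : A * PΩA = U * PΩU := by
    rw [hPBeq, hA]; simp only [Matrix.mul_assoc]; rw [cV, cSg]
  -- vector-level facts
  set c : Fin n → ℝ := Uᵀ.mulVec b with hc
  set d : Fin m → ℝ := b - U.mulVec c with hd
  set w : Fin n → ℝ := PΩU.mulVec (Ωᵀ.mulVec b) - c with hw
  have hUtU_vec : ∀ x : Fin n → ℝ, Uᵀ.mulVec (U.mulVec x) = x := by
    intro x; rw [Matrix.mulVec_mulVec, hU, Matrix.one_mulVec]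
  have hUtd : Uᵀ.mulVec d = 0 := by
    rw [hd, Matrix.mulVec_sub, hUtU_vec, hc, sub_self]
  -- residual of exact problem
  have hres : A.mulVec (PA.mulVec b) - b = -d := by
    rw [Matrix.mulVec_mulVec, key1, hd, ← Matrix.mulVec_mulVec, ← hc]
    abel
  -- residual of sketched problem
  have hres2 : A.mulVec (PΩA.mulVec (Ωᵀ.mulVec b)) - b = U.mulVec w - d := by
    rw [Matrix.mulVec_mulVec, key2, ← Matrix.mulVec_mulVec]
    rw [hw, hd, Matrix.mulVec_sub]
    abel
  -- sketched residual of projected residual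
  have hΩd : Ωᵀ.mulVec d = Ωᵀ.mulVec b - W.mulVec c := by
    rw [hd, Matrix.mulVec_sub, Matrix.mulVec_mulVec, hW]
  have hPdw : (PΩU * Ωᵀ).mulVec d = w := by
    rw [← Matrix.mulVec_mulVec, hΩd, Matrix.mulVec_sub,
      Matrix.mulVec_mulVec _ PΩU W, hPW, Matrix.one_mulVec, hw]
  have hPd : (PΩU * Ωᵀ).mulVec (-d) = -w := by
    rw [Matrix.mulVec_neg, hPdw]
  -- norms as dot products
  have vnorm_sq : ∀ {k : ℕ} (v : Fin k → ℝ), vnorm v ^ 2 = v ⬝ᵥ v := by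
    intro k v
    rw [vnorm, Real.sq_sqrt (by positivity)]
    simp [dotProduct, sq]
  have adj : ∀ (x : Fin n → ℝ) (y : Fin m → ℝ),
      (U.mulVec x) ⬝ᵥ y = x ⬝ᵥ (Uᵀ.mulVec y) := by
    intro x y
    rw [Matrix.dotProduct_mulVec, Matrix.vecMul_transpose]
  rw [hres, hres2, hPd, vnorm_sq, vnorm_sq, vnorm_sq]
  apply le_of_eq
  have e1 : (U.mulVec w) ⬝ᵥ (U.mulVec w) = w ⬝ᵥ w := by
    rw [adj, hUtU_vec]
  have e2 : (U.mulVec w) ⬝ᵥ d = 0 := by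
    rw [adj, hUtd, dotProduct_zero]
  have e3 : d ⬝ᵥ (U.mulVec w) = 0 := by
    rw [dotProduct_comm, e2]
  simp only [sub_dotProduct, dotProduct_sub, neg_dotProduct,
    dotProduct_neg, e1, e2, e3, neg_neg]
  ring
end

section
/- (Hoeffding's reduction) Let V be a finite set of vectors in a normed space, let V₁,…,V_r be sampled uniformly without replacement from V and V₁′,…,V_r′ sampled uniformly with replacement. Then for every convex real-valued function g on the vector space, E[g(Σᵢ₌₁^r Vᵢ)] ≤ E[g(Σᵢ₌₁^r Vᵢ′)]. -/
open Finset
variable {n r : ℕ}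

noncomputable def gE (f : Fin r → Fin n) : Finset (Fin r ↪ Fin n) :=
  @Finset.filter _ (fun e => ∀ i, ∃ j, e j = f i) (Classical.decPred _) Finset.univ

lemma mem_gE {f : Fin r → Fin n} {e : Fin r ↪ Fin n} :
    e ∈ gE f ↔ ∀ i, ∃ j, e j = f i := by
  simp [gE]

lemma gE_nonempty (hr : r ≤ n) (f : Fin r → Fin n) : (gE f).Nonempty := by
  classical
  have hcard : (Finset.univ.image f).card ≤ r := by
    simpa using Finset.card_image_le (s := (Finset.univ : Finset (Fin r))) (f := f)
  obtain ⟨T, hsub, hT⟩ := Finset.exists_superset_card_eq hcard (by simpa using hr)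
  let q : T ≃ Fin r := T.equivFinOfCardEq hT
  refine ⟨(q.symm.toEmbedding.trans (Function.Embedding.subtype _)), ?_⟩
  rw [mem_gE]
  intro i
  have hfi : f i ∈ T := hsub (Finset.mem_image_of_mem f (Finset.mem_univ i))
  exact ⟨q ⟨f i, hfi⟩, by simp⟩

noncomputable def W (f : Fin r → Fin n) (e : Fin r ↪ Fin n) : ℝ :=
  if e ∈ gE f then ((gE f).card : ℝ)⁻¹ else 0

lemma W_nonneg (f : Fin r → Fin n) (e : Fin r ↪ Fin n) : 0 ≤ W f e := by
  unfold W; split <;> positivity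

noncomputable def permComp (σ : Equiv.Perm (Fin n)) : (Fin r ↪ Fin n) ≃ (Fin r ↪ Fin n) :=
  Equiv.embeddingCongr (Equiv.refl (Fin r)) σ

lemma permComp_apply (σ : Equiv.Perm (Fin n)) (e : Fin r ↪ Fin n) (i : Fin r) :
    permComp σ e i = σ (e i) := rfl

lemma mem_gE_comp {σ : Equiv.Perm (Fin n)} {f : Fin r → Fin n} {e : Fin r ↪ Fin n} :
    permComp σ e ∈ gE (σ ∘ f) ↔ e ∈ gE f := by
  simp only [mem_gE, permComp_apply, Function.comp_apply]
  exact forall_congr' fun i => ⟨fun ⟨j, hj⟩ => ⟨j, σ.injective hj⟩, fun ⟨j, hj⟩ => ⟨j, by rw [hj]⟩⟩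

lemma gE_comp_card (σ : Equiv.Perm (Fin n)) (f : Fin r → Fin n) :
    (gE (σ ∘ f)).card = (gE f).card := by
  classical
  refine Finset.card_bij' (fun e _ => (permComp σ).symm e) (fun e _ => permComp σ e)
    ?_ ?_ ?_ ?_
  · intro e' he'
    have h := mem_gE_comp (σ := σ) (f := f) (e := (permComp σ).symm e')
    rw [Equiv.apply_symm_apply] at h
    exact h.1 he'
  · intro e he; exact mem_gE_comp.2 he
  · intro e _; simp
  · intro e _; simp

lemma W_comp (σ : Equiv.Perm (Fin n)) (f : Fin r → Fin n) (e : Fin r ↪ Fin n) :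
    W (σ ∘ f) (permComp σ e) = W f e := by
  unfold W
  rw [gE_comp_card]
  by_cases h : e ∈ gE f
  · rw [if_pos (mem_gE_comp.2 h), if_pos h]
  · rw [if_neg (fun hc => h (mem_gE_comp.1 hc)), if_neg h]

lemma sum_W_right {f : Fin r → Fin n} (h : (gE f).Nonempty) :
    ∑ e : Fin r ↪ Fin n, W f e = 1 := by
  classical
  unfold W
  rw [Finset.sum_ite_mem, Finset.univ_inter, Finset.sum_const, nsmul_eq_mul]
  rw [mul_inv_cancel₀]
  exact_mod_cast (Finset.card_pos.2 h).ne'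

lemma exists_perm_comp (e e' : Fin r ↪ Fin n) :
    ∃ σ : Equiv.Perm (Fin n), ∀ i, σ (e i) = e' i := by
  classical
  let s : Set (Fin n) := Set.range e
  let t : Set (Fin n) := Set.range e'
  let e₀ : s ≃ t := (Equiv.ofInjective _ e.injective).symm.trans (Equiv.ofInjective _ e'.injective)
  have hcs : Fintype.card s = r := by
    have := Fintype.card_congr (Equiv.ofInjective _ e.injective)
    simp_all
  have hct : Fintype.card t = r := by
    have := Fintype.card_congr (Equiv.ofInjective _ e'.injective)
    simp_all
  have hcompl : Fintype.card (sᶜ : Set (Fin n)) = Fintype.card (tᶜ : Set (Fin n)) := by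
    rw [Fintype.card_compl_set, Fintype.card_compl_set, hcs, hct]
  let e₁ : (sᶜ : Set (Fin n)) ≃ (tᶜ : Set (Fin n)) := Fintype.equivOfCardEq hcompl
  obtain ⟨σ, hσ⟩ := (Equiv.Set.compl e₀).symm e₁
  refine ⟨σ, fun i => ?_⟩
  have := hσ ⟨e i, Set.mem_range_self i⟩
  have he₀ : e₀ ⟨e i, Set.mem_range_self i⟩ = ⟨e' i, Set.mem_range_self i⟩ := by
    simp only [e₀, Equiv.trans_apply]
    have : (Equiv.ofInjective _ e.injective).symm ⟨e i, Set.mem_range_self i⟩ = i := by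
      apply (Equiv.ofInjective _ e.injective).injective
      simp [Equiv.apply_symm_apply]
    rw [this]
    rfl
  rw [he₀] at this
  exact this

lemma sumW_const (e e' : Fin r ↪ Fin n) :
    ∑ f : Fin r → Fin n, W f e = ∑ f : Fin r → Fin n, W f e' := by
  classical
  obtain ⟨σ, hσ⟩ := exists_perm_comp e e'
  have hpc : permComp σ e = e' := by
    refine DFunLike.ext _ _ fun i => hσ i
  calc ∑ f : Fin r → Fin n, W f e
      = ∑ f : Fin r → Fin n, W (σ ∘ f) e' := by
        refine Finset.sum_congr rfl fun f _ => ?_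
        rw [← hpc, W_comp]
    _ = ∑ f : Fin r → Fin n, W f e' := by
        exact Fintype.sum_equiv (Equiv.arrowCongr (Equiv.refl (Fin r)) σ)
          (fun f => W (σ ∘ f) e') (fun f => W f e')
          (fun f => by congr 1)

lemma sumW_val (hr : r ≤ n) (e : Fin r ↪ Fin n) :
    ∑ f : Fin r → Fin n, W f e
      = (n : ℝ) ^ r / (Fintype.card (Fin r ↪ Fin n) : ℝ) := by
  classical
  have hN : (0 : ℝ) < (Fintype.card (Fin r ↪ Fin n) : ℝ) := by
    have : Nonempty (Fin r ↪ Fin n) := ⟨Fin.castLEEmb hr⟩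
    exact_mod_cast Fintype.card_pos
  have key : (Fintype.card (Fin r ↪ Fin n) : ℝ) * ∑ f : Fin r → Fin n, W f e
      = (n : ℝ) ^ r := by
    have h1 : ∑ e' : Fin r ↪ Fin n, ∑ f : Fin r → Fin n, W f e'
        = (Fintype.card (Fin r ↪ Fin n) : ℝ) * ∑ f : Fin r → Fin n, W f e := by
      rw [Finset.sum_congr rfl fun e' _ => sumW_const e' e]
      rw [Finset.sum_const, nsmul_eq_mul]
      simp
    have h2 : ∑ e' : Fin r ↪ Fin n, ∑ f : Fin r → Fin n, W f e'
        = (n : ℝ) ^ r := by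
      rw [Finset.sum_comm]
      rw [Finset.sum_congr rfl fun f _ => sum_W_right (gE_nonempty hr f)]
      simp [Fintype.card_fun]
    rw [← h1, h2]
  rw [eq_div_iff hN.ne', mul_comm]
  exact key

lemma W_swap (e : Fin r ↪ Fin n) (a b : Fin r) (f : Fin r → Fin n) :
    W ((Equiv.swap (e a) (e b)) ∘ f) e = W f e := by
  classical
  have key : ∀ (g : Fin r → Fin n), (∀ i, ∃ j, e j = g i) →
      ∀ i, ∃ j, e j = Equiv.swap (e a) (e b) (g i) := by
    intro g hg i
    obtain ⟨j, hj⟩ := hg i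
    refine ⟨Equiv.swap a b j, ?_⟩
    rw [← hj, Function.Injective.swap_apply e.injective]
  have hmem : e ∈ gE ((Equiv.swap (e a) (e b)) ∘ f) ↔ e ∈ gE f := by
    simp only [mem_gE, Function.comp_apply]
    constructor
    · intro h i
      have := key _ h i
      simpa using this
    · intro h
      exact key f h
  unfold W
  rw [gE_comp_card (Equiv.swap (e a) (e b)) f]
  by_cases h : e ∈ gE f
  · rw [if_pos (hmem.2 h), if_pos h]
  · rw [if_neg (fun hc => h (hmem.1 hc)), if_neg h]

lemma mean_W {E : Type*} [AddCommGroup E] [Module ℝ E]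
    (hr0 : 0 < r) (v : Fin n → E) (e : Fin r ↪ Fin n) :
    ∑ f : Fin r → Fin n, W f e • (∑ i, v (f i))
      = (∑ f : Fin r → Fin n, W f e) • ∑ a, v (e a) := by
  classical
  set T := ∑ f : Fin r → Fin n, W f e with hT
  set m : Fin r → Fin n → ℝ :=
    fun i j => ∑ f : Fin r → Fin n, W f e * (if f i = j then 1 else 0) with hm
  have mzero : ∀ i j, (∀ a, e a ≠ j) → m i j = 0 := by
    intro i j hj
    refine Finset.sum_eq_zero fun f _ => ?_
    by_cases hfi : f i = j
    · have hne : e ∉ gE f := by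
        rw [mem_gE]; intro h; obtain ⟨a, ha⟩ := h i; exact hj a (by rw [ha, hfi])
      simp [W, hne]
    · simp [hfi]
  have mswap : ∀ i (a b : Fin r), m i (e a) = m i (e b) := by
    intro i a b
    refine Fintype.sum_equiv
      (Equiv.arrowCongr (Equiv.refl (Fin r)) (Equiv.swap (e a) (e b)))
      (fun f => W f e * (if f i = e a then 1 else 0))
      (fun f => W f e * (if f i = e b then 1 else 0)) ?_
    intro f
    beta_reduce
    rw [show (Equiv.arrowCongr (Equiv.refl (Fin r)) (Equiv.swap (e a) (e b))) f
        = (Equiv.swap (e a) (e b)) ∘ f from by ext x; simp, W_swap]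
    congr 1
    have hiff : ((Equiv.swap (e a) (e b)) (f i) = e b) ↔ (f i = e a) := by
      constructor
      · intro h
        have := congrArg (Equiv.swap (e a) (e b)) h
        rwa [Equiv.swap_apply_self, Equiv.swap_apply_right] at this
      · intro h; rw [h, Equiv.swap_apply_left]
    simp only [Function.comp_apply]
    rw [if_congr hiff.symm rfl rfl]
  have msum : ∀ i, ∑ j : Fin n, m i j = T := by
    intro i
    rw [hm, Finset.sum_comm, hT]
    refine Finset.sum_congr rfl fun f _ => ?_
    rw [← Finset.mul_sum]
    simp
  have hsum_split : ∀ (F : Fin n → ℝ) (G : Fin n → E),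
      (∀ j, (∀ a, e a ≠ j) → F j = 0) →
      ∑ j : Fin n, F j • G j = ∑ b : Fin r, F (e b) • G (e b) := by
    intro F G hF
    rw [← Finset.sum_image (g := ⇑e) (f := fun j => F j • G j)
      (fun x _ y _ h => e.injective h)]
    symm
    apply Finset.sum_subset (Finset.subset_univ _)
    intro j _ hj
    have : F j = 0 := by
      apply hF
      intro a ha
      exact hj (Finset.mem_image.2 ⟨a, Finset.mem_univ a, ha⟩)
    rw [this, zero_smul]
  have mval : ∀ i (a : Fin r), m i (e a) = T / r := by
    intro i a
    have h1 : ∑ b : Fin r, m i (e b) = (r : ℝ) * m i (e a) := by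
      rw [Finset.sum_congr rfl fun b _ => mswap i b a]
      simp [Finset.sum_const, mul_comm]
    have h2 : ∑ j : Fin n, m i j = ∑ b : Fin r, m i (e b) := by
      rw [← Finset.sum_image (g := ⇑e) (f := m i) (fun x _ y _ h => e.injective h)]
      symm
      apply Finset.sum_subset (Finset.subset_univ _)
      intro j _ hj
      apply mzero
      intro a' ha'
      exact hj (Finset.mem_image.2 ⟨a', Finset.mem_univ a', ha'⟩)
    have hrne : (r : ℝ) ≠ 0 := Nat.cast_ne_zero.2 hr0.ne'
    rw [eq_div_iff hrne]
    rw [msum i] at h2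
    rw [h1] at h2
    linarith [h2]
  have step : ∀ i, ∑ f : Fin r → Fin n, W f e • v (f i) = ∑ j : Fin n, m i j • v j := by
    intro i
    simp only [hm, Finset.sum_smul]
    rw [Finset.sum_comm]
    refine Finset.sum_congr rfl fun f _ => ?_
    have hterm : ∀ j, (W f e * if f i = j then 1 else 0) • v j
        = if f i = j then W f e • v j else 0 := by
      intro j; split <;> simp
    rw [Finset.sum_congr rfl fun j _ => hterm j]
    rw [Finset.sum_ite_eq]
    simp
  calc ∑ f : Fin r → Fin n, W f e • (∑ i, v (f i))
      = ∑ f : Fin r → Fin n, ∑ i, W f e • v (f i) := by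
        refine Finset.sum_congr rfl fun f _ => Finset.smul_sum
    _ = ∑ i : Fin r, ∑ f : Fin r → Fin n, W f e • v (f i) := Finset.sum_comm
    _ = ∑ i : Fin r, ∑ j : Fin n, m i j • v j := Finset.sum_congr rfl fun i _ => step i
    _ = ∑ i : Fin r, ∑ b : Fin r, m i (e b) • v (e b) :=
        Finset.sum_congr rfl fun i _ => hsum_split (m i) v (mzero i)
    _ = ∑ i : Fin r, (T / r) • ∑ b : Fin r, v (e b) := by
        refine Finset.sum_congr rfl fun i _ => ?_
        rw [Finset.smul_sum]
        exact Finset.sum_congr rfl fun b _ => by rw [mval i b]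
    _ = T • ∑ a, v (e a) := by
        rw [Finset.sum_const, Finset.card_univ, Fintype.card_fin]
        rw [← Nat.cast_smul_eq_nsmul ℝ, smul_smul]
        congr 1
        have hrne : (r : ℝ) ≠ 0 := Nat.cast_ne_zero.2 hr0.ne'
        field_simp

/-- Hoeffding's reduction: for any convex function `g`, the expectation of
`g` of a sum of `r` vectors sampled uniformly without replacement (a uniformly
random injection `Fin r ↪ Fin n`) is at most the expectation when the vectors
are sampled uniformly with replacement (a uniformly random function
`Fin r → Fin n`). -/
theorem hoeffding_reduction
    {E : Type*} [AddCommGroup E] [Module ℝ E]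
    {n r : ℕ} (hn : 0 < n) (hr : r ≤ n) (v : Fin n → E)
    (g : E → ℝ) (hg : ConvexOn ℝ Set.univ g) :
    (Nat.card (Fin r ↪ Fin n) : ℝ)⁻¹ * ∑ e : Fin r ↪ Fin n, g (∑ i, v (e i)) ≤
      ((n : ℝ) ^ r)⁻¹ * ∑ f : Fin r → Fin n, g (∑ i, v (f i)) := by
  classical
  rcases Nat.eq_zero_or_pos r with hr0 | hr0
  · subst hr0
    simp [Nat.card_eq_fintype_card, Fintype.card_embedding_eq, Finset.sum_const,
      Finset.card_univ, Fintype.card_fun]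
  · have hNnat : 0 < Fintype.card (Fin r ↪ Fin n) := by
      have : Nonempty (Fin r ↪ Fin n) := ⟨Fin.castLEEmb hr⟩
      exact Fintype.card_pos
    set N : ℝ := (Fintype.card (Fin r ↪ Fin n) : ℝ) with hN
    have hNpos : (0 : ℝ) < N := by rw [hN]; exact_mod_cast hNnat
    have hnr : (0 : ℝ) < (n : ℝ) ^ r := by positivity
    have hTpos : (0 : ℝ) < (n : ℝ) ^ r / N := div_pos hnr hNpos
    have key : ∀ e : Fin r ↪ Fin n,
        ((n : ℝ) ^ r / N) * g (∑ i, v (e i))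
          ≤ ∑ f : Fin r → Fin n, W f e * g (∑ i, v (f i)) := by
      intro e
      have jensen := hg.map_centerMass_le (t := Finset.univ) (w := fun f => W f e)
        (p := fun f => ∑ i, v (f i))
        (fun f _ => W_nonneg f e) (by rw [sumW_val hr e]; exact hTpos)
        (fun f _ => Set.mem_univ _)
      have hcm : Finset.univ.centerMass (fun f => W f e) (fun f => ∑ i, v (f i))
          = ∑ i, v (e i) := by
        rw [Finset.centerMass, mean_W hr0 v e, smul_smul, inv_mul_cancel₀, one_smul]
        rw [sumW_val hr e]
        exact hTpos.ne'
      rw [hcm, Finset.centerMass, sumW_val hr e] at jensen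
      have h2 := mul_le_mul_of_nonneg_left jensen hTpos.le
      calc ((n : ℝ) ^ r / N) * g (∑ i, v (e i))
          ≤ ((n : ℝ) ^ r / N) * (((n : ℝ) ^ r / N)⁻¹
              • ∑ f : Fin r → Fin n, W f e • (fun f => g (∑ i, v (f i))) f) := h2
        _ = ∑ f : Fin r → Fin n, W f e * g (∑ i, v (f i)) := by
            rw [smul_eq_mul, ← mul_assoc, mul_inv_cancel₀ hTpos.ne', one_mul]
            simp [smul_eq_mul]
    have summed : ((n : ℝ) ^ r / N) * ∑ e : Fin r ↪ Fin n, g (∑ i, v (e i))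
        ≤ ∑ f : Fin r → Fin n, g (∑ i, v (f i)) := by
      rw [Finset.mul_sum]
      calc ∑ e : Fin r ↪ Fin n, ((n : ℝ) ^ r / N) * g (∑ i, v (e i))
          ≤ ∑ e : Fin r ↪ Fin n, ∑ f : Fin r → Fin n, W f e * g (∑ i, v (f i)) :=
            Finset.sum_le_sum fun e _ => key e
        _ = ∑ f : Fin r → Fin n, (∑ e : Fin r ↪ Fin n, W f e) * g (∑ i, v (f i)) := by
            rw [Finset.sum_comm]
            exact Finset.sum_congr rfl fun f _ => by rw [Finset.sum_mul]
        _ = ∑ f : Fin r → Fin n, g (∑ i, v (f i)) := by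
            refine Finset.sum_congr rfl fun f _ => ?_
            rw [sum_W_right (gE_nonempty hr f), one_mul]
    rw [Nat.card_eq_fintype_card, ← hN]
    have := mul_le_mul_of_nonneg_left summed (inv_nonneg.2 hnr.le)
    calc N⁻¹ * ∑ e : Fin r ↪ Fin n, g (∑ i, v (e i))
        = ((n : ℝ) ^ r)⁻¹ * (((n : ℝ) ^ r / N) * ∑ e : Fin r ↪ Fin n, g (∑ i, v (e i))) := by
          field_simp
      _ ≤ ((n : ℝ) ^ r)⁻¹ * ∑ f : Fin r → Fin n, g (∑ i, v (f i)) := this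
end

section
/- Let {c_j}_{j=1}^n be nonnegative reals with max_j c_j ≤ B, and let X₁,…,X_r be sampled uniformly at random without replacement from {c_j}. Set μ = r·(Σⱼ c_j)/n. Then for every η ≥ 0, P(Σᵢ₌₁^r Xᵢ ≥ (1+η) μ) ≤ (e^η/(1+η)^{1+η})^{μ/B}. (Scalar Chernoff bound for sampling without replacement.) -/
/-!
Markov's inequality for `exp (t ∑ Xᵢ)` reduces the bound to one on the moment generating
function, and `exp (t ∑ Xᵢ) = ∏ exp (t Xᵢ)`. For nonnegative weights `x` on a set of size `n`,
the average of `∏ᵢ x (e i)` over injections `e : Fin r ↪ α` is at most `(∑ x / n) ^ r`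
(Maclaurin's inequality): sampling without replacement is dominated by sampling with replacement.
By induction on `r`, with `M r = ∑ₑ ∏ᵢ x (e i)` and `S = ∑ x`,
`M (r + 1) = S * M r - ∑ₑ (∑ᵢ x (e i)) * ∏ᵢ x (e i)`, and Chebyshev's sum inequality bounds the
subtracted term from below by `r / n * S * M r`. Convexity of `exp` on `[0, B]` then gives
`exp (t c) ≤ 1 + c / B * (exp (t B) - 1)`, and `t = log (1 + η) / B` yields the Chernoff rate.
-/

open Finset Real

theorem prod_le_prod_swap_of_mem_map {α : Type*} [DecidableEq α] {r : ℕ} (x : α → ℝ)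
    (hx : ∀ a, 0 ≤ x a) {j k : α} (hjk : x j ≤ x k) (e : Fin r ↪ α) (hj : j ∈ univ.map e) :
    ∏ i, x (e i) ≤ ∏ i, x (Equiv.swap j k (e i)) := by
  obtain ⟨i₀, -, rfl⟩ := mem_map.1 hj
  by_cases hk : k ∈ univ.map e
  · obtain ⟨i₁, -, rfl⟩ := mem_map.1 hk
    simp_rw [← e.injective.map_swap]
    exact (Equiv.prod_comp (Equiv.swap i₀ i₁) fun i => x (e i)).ge
  · refine prod_le_prod (fun i _ => hx _) fun i _ => ?_
    have hik : e i ≠ k := fun h => hk (h ▸ mem_map_of_mem e (mem_univ i))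
    rcases eq_or_ne (e i) (e i₀) with h | h
    · rw [h, Equiv.swap_apply_left]
      exact hjk
    · rw [Equiv.swap_apply_of_ne_of_ne h hik]

section Embedding

variable {α : Type*} [Fintype α] {r : ℕ}

theorem sum_mul_sum_filter_mem_map [DecidableEq α] (g : α → ℝ) (w : (Fin r ↪ α) → ℝ) :
    ∑ a, g a * ∑ e with a ∈ univ.map e, w e = ∑ e, (∑ i, g (e i)) * w e := by
  simp_rw [sum_filter, mul_sum, mul_ite, mul_zero]
  rw [sum_comm]
  refine sum_congr rfl fun e _ => ?_
  rw [sum_ite_mem, univ_inter, sum_map, sum_mul]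

theorem monovary_sum_filter_mem_map_prod [DecidableEq α] (x : α → ℝ) (hx : ∀ a, 0 ≤ x a) :
    Monovary (fun a => ∑ e : Fin r ↪ α with a ∈ univ.map e, ∏ i, x (e i)) x := by
  intro j k hjk
  have hreindex : ∑ e : Fin r ↪ α with k ∈ univ.map e, ∏ i, x (e i) =
      ∑ e : Fin r ↪ α with j ∈ univ.map e, ∏ i, x (Equiv.swap j k (e i)) := by
    refine sum_equiv (Equiv.embeddingCongr (Equiv.refl _) (Equiv.swap j k)) (fun e => ?_)
      fun e _ => ?_
    · simp [Equiv.swap_apply_eq_iff]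
    · simp
  dsimp only
  rw [hreindex]
  exact sum_le_sum fun e he => prod_le_prod_swap_of_mem_map x hx hjk.le e (mem_filter.1 he).2

theorem card_mul_sum_mul_sum_prod_embedding_le (x : α → ℝ) (hx : ∀ a, 0 ≤ x a) :
    r * (∑ a, x a) * ∑ e : Fin r ↪ α, ∏ i, x (e i) ≤
      Fintype.card α * ∑ e : Fin r ↪ α, (∑ i, x (e i)) * ∏ i, x (e i) := by
  classical
  have hcount : ∑ a, ∑ e : Fin r ↪ α with a ∈ univ.map e, ∏ i, x (e i) =
      r * ∑ e : Fin r ↪ α, ∏ i, x (e i) := by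
    simpa [mul_sum] using sum_mul_sum_filter_mem_map 1 fun e : Fin r ↪ α => ∏ i, x (e i)
  calc r * (∑ a, x a) * ∑ e : Fin r ↪ α, ∏ i, x (e i)
      = (∑ a, ∑ e : Fin r ↪ α with a ∈ univ.map e, ∏ i, x (e i)) * ∑ a, x a := by
        rw [hcount]
        ring
    _ ≤ Fintype.card α * ∑ a, (∑ e : Fin r ↪ α with a ∈ univ.map e, ∏ i, x (e i)) * x a :=
        (monovary_sum_filter_mem_map_prod x hx).sum_mul_sum_le_card_mul_sum
    _ = Fintype.card α * ∑ e : Fin r ↪ α, (∑ i, x (e i)) * ∏ i, x (e i) := by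
        simp_rw [mul_comm _ (x _), sum_mul_sum_filter_mem_map]

theorem sum_prod_embedding_succ (x : α → ℝ) :
    ∑ e : Fin (r + 1) ↪ α, ∏ i, x (e i) =
      ∑ e : Fin r ↪ α, (∏ i, x (e i)) * ((∑ a, x a) - ∑ i, x (e i)) := by
  classical
  rw [← (Equiv.embeddingFinSucc r α).symm.sum_comp, Fintype.sum_sigma]
  refine sum_congr rfl fun e _ => ?_
  simp only [Equiv.coe_embeddingFinSucc_symm, Fin.prod_univ_succ, Fin.cons_zero, Fin.cons_succ]
  rw [← sum_mul, mul_comm]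
  congr 1
  rw [eq_sub_iff_add_eq, ← sum_map univ e x, ← sum_compl_add_sum (univ.map e)]
  congr 1
  exact (sum_subtype _ (fun a => by simp) x).symm

theorem sum_prod_embedding_le (x : α → ℝ) (hx : ∀ a, 0 ≤ x a) (r : ℕ) :
    ∑ e : Fin r ↪ α, ∏ i, x (e i) ≤
      Fintype.card (Fin r ↪ α) * ((∑ a, x a) / Fintype.card α) ^ r := by
  induction r with
  | zero => simp
  | succ r ih =>
    set n := Fintype.card α
    set S := ∑ a, x a
    rcases le_or_gt n r with hnr | hrn
    · have : IsEmpty (Fin (r + 1) ↪ α) := by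
        rw [← Fintype.card_eq_zero_iff, Fintype.card_embedding_eq, Fintype.card_fin,
          Nat.descFactorial_eq_zero_iff_lt]
        omega
      simp
    have hn : (0 : ℝ) < n := by exact_mod_cast r.zero_le.trans_lt hrn
    have hrn' : (r : ℝ) ≤ n := by exact_mod_cast hrn.le
    have hS : 0 ≤ S := sum_nonneg fun a _ => hx a
    have hcard : (Fintype.card (Fin (r + 1) ↪ α) : ℝ) = (n - r) * Fintype.card (Fin r ↪ α) := by
      rw [Fintype.card_embedding_eq, Fintype.card_embedding_eq, Fintype.card_fin,
        Fintype.card_fin, Nat.descFactorial_succ, Nat.cast_mul, Nat.cast_sub hrn.le]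
    have hcorr := card_mul_sum_mul_sum_prod_embedding_le x hx (r := r)
    calc ∑ e : Fin (r + 1) ↪ α, ∏ i, x (e i)
        = S * ∑ e : Fin r ↪ α, ∏ i, x (e i) -
            ∑ e : Fin r ↪ α, (∑ i, x (e i)) * ∏ i, x (e i) := by
          rw [sum_prod_embedding_succ, mul_sum, ← sum_sub_distrib]
          exact sum_congr rfl fun e _ => by ring
      _ ≤ (n - r) / n * S * ∑ e : Fin r ↪ α, ∏ i, x (e i) := by
          rw [div_mul_eq_mul_div, div_mul_eq_mul_div, le_div_iff₀ hn]
          linarith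
      _ ≤ (n - r) / n * S * (Fintype.card (Fin r ↪ α) * (S / n) ^ r) := by
          gcongr
      _ = Fintype.card (Fin (r + 1) ↪ α) * (S / n) ^ (r + 1) := by
          rw [hcard]
          ring

end Embedding

theorem exp_mul_le_one_add_div_mul {B c : ℝ} (t : ℝ) (hB : 0 < B) (hc₀ : 0 ≤ c) (hcB : c ≤ B) :
    exp (t * c) ≤ 1 + c / B * (exp (t * B) - 1) := by
  have hconv := convexOn_exp.2 (Set.mem_univ 0) (Set.mem_univ (t * B))
    (sub_nonneg.2 ((div_le_one hB).2 hcB)) (div_nonneg hc₀ hB.le) (sub_add_cancel 1 (c / B))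
  simp only [smul_eq_mul, mul_zero, zero_add, exp_zero, mul_one] at hconv
  calc exp (t * c) = exp (c / B * (t * B)) := by field_simp
    _ ≤ 1 - c / B + c / B * exp (t * B) := hconv
    _ = 1 + c / B * (exp (t * B) - 1) := by ring

section MomentGeneratingFunction

variable {α : Type*} [Fintype α] {c : α → ℝ} {B : ℝ}

theorem sum_exp_mul_div_card_le (hB : 0 < B) (hc : ∀ a, 0 ≤ c a) (hcB : ∀ a, c a ≤ B) (t : ℝ) :
    (∑ a, exp (t * c a)) / Fintype.card α ≤
      1 + (exp (t * B) - 1) * (∑ a, c a) / (Fintype.card α * B) := by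
  rcases (Nat.cast_nonneg (Fintype.card α) : (0 : ℝ) ≤ _).eq_or_lt with hn | hn
  · simp [← hn]
  rw [div_le_iff₀ hn]
  calc ∑ a, exp (t * c a) ≤ ∑ a, (1 + c a / B * (exp (t * B) - 1)) :=
        sum_le_sum fun a _ => exp_mul_le_one_add_div_mul t hB (hc a) (hcB a)
    _ = (1 + (exp (t * B) - 1) * (∑ a, c a) / (Fintype.card α * B)) * Fintype.card α := by
        rw [sum_add_distrib, ← sum_mul, ← sum_div, sum_const, card_univ, nsmul_one]
        field_simp

theorem sum_embedding_exp_mul_sum_le (hB : 0 < B) (hc : ∀ a, 0 ≤ c a) (hcB : ∀ a, c a ≤ B)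
    (t : ℝ) (r : ℕ) :
    ∑ e : Fin r ↪ α, exp (t * ∑ i, c (e i)) ≤ Fintype.card (Fin r ↪ α) *
      exp (r * ((exp (t * B) - 1) * (∑ a, c a) / (Fintype.card α * B))) := by
  have hmean := sum_exp_mul_div_card_le hB hc hcB t
  have hprod (e : Fin r ↪ α) : exp (t * ∑ i, c (e i)) = ∏ i, exp (t * c (e i)) := by
    rw [mul_sum, exp_sum]
  simp only [hprod]
  calc ∑ e : Fin r ↪ α, ∏ i, exp (t * c (e i))
      ≤ Fintype.card (Fin r ↪ α) * ((∑ a, exp (t * c a)) / Fintype.card α) ^ r :=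
        sum_prod_embedding_le (fun a => exp (t * c a)) (fun a => (exp_pos _).le) r
    _ ≤ Fintype.card (Fin r ↪ α) *
          exp ((exp (t * B) - 1) * (∑ a, c a) / (Fintype.card α * B)) ^ r := by
        gcongr
        linarith [add_one_le_exp ((exp (t * B) - 1) * (∑ a, c a) / (Fintype.card α * B))]
    _ = _ := by rw [exp_nat_mul]

end MomentGeneratingFunction

theorem nat_card_mul_exp_le_sum_exp {β : Type*} [Fintype β] (f : β → ℝ) {t : ℝ} (ht : 0 ≤ t)
    (θ : ℝ) : (Nat.card {b // θ ≤ f b} : ℝ) * exp (t * θ) ≤ ∑ b, exp (t * f b) := by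
  classical
  rw [Nat.card_eq_fintype_card, Fintype.card_subtype, ← nsmul_eq_mul, ← sum_const]
  calc ∑ b with θ ≤ f b, exp (t * θ) ≤ ∑ b with θ ≤ f b, exp (t * f b) :=
        sum_le_sum fun b hb => exp_le_exp.2 (mul_le_mul_of_nonneg_left (mem_filter.1 hb).2 ht)
    _ ≤ ∑ b, exp (t * f b) :=
        sum_le_sum_of_subset_of_nonneg (filter_subset _ _) fun _ _ _ => (exp_pos _).le

theorem chernoff_rate_rpow {η : ℝ} (hη : 0 < 1 + η) (s : ℝ) :
    (exp η / (1 + η) ^ (1 + η)) ^ s = exp (η * s) / exp (log (1 + η) * (1 + η) * s) := by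
  rw [rpow_def_of_pos (div_pos (exp_pos η) (rpow_pos_of_pos hη _)),
    log_div (exp_ne_zero η) (rpow_pos_of_pos hη _).ne', log_exp, log_rpow hη, ← exp_sub]
  ring_nf

theorem scalar_chernoff_without_replacement_general
    {n : ℕ} (r : ℕ)
    (c : Fin n → ℝ) (B : ℝ) (hc : ∀ j, 0 ≤ c j) (hB : ∀ j, c j ≤ B)
    (η : ℝ) (hη : 0 ≤ η) :
    (Nat.card {e : Fin r ↪ Fin n //
        (1 + η) * ((r : ℝ) * (∑ j, c j) / n) ≤ ∑ i, c (e i)} : ℝ) ≤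
      (Real.exp η / (1 + η) ^ (1 + η)) ^ (((r : ℝ) * (∑ j, c j) / n) / B) *
        (Nat.card (Fin r ↪ Fin n) : ℝ) := by
  set μ := (r : ℝ) * (∑ j, c j) / n
  rcases (sum_nonneg fun j _ => hc j : 0 ≤ ∑ j, c j).eq_or_lt with hS | hS
  · have hμ : μ = 0 := by simp [μ, ← hS]
    rw [hμ, zero_div, rpow_zero, one_mul]
    exact_mod_cast Finite.card_subtype_le _
  have hBpos : 0 < B := by
    by_contra! h
    exact hS.not_ge (sum_nonpos fun j _ => (hB j).trans h)
  have h1η : 0 < 1 + η := by linarith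
  set t := log (1 + η) / B
  have ht : 0 ≤ t := div_nonneg (log_nonneg (by linarith)) hBpos.le
  have htB : exp (t * B) = 1 + η := by rw [div_mul_cancel₀ _ hBpos.ne', exp_log h1η]
  have hmgf := sum_embedding_exp_mul_sum_le hBpos hc hB t r
  rw [htB, add_sub_cancel_left, Fintype.card_fin] at hmgf
  rw [chernoff_rate_rpow h1η, div_mul_eq_mul_div, le_div_iff₀ (exp_pos _)]
  calc _ = _ * exp (t * ((1 + η) * μ)) := by simp only [t]; ring_nf
    _ ≤ ∑ e : Fin r ↪ Fin n, exp (t * ∑ i, c (e i)) := nat_card_mul_exp_le_sum_exp _ ht _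
    _ ≤ _ := hmgf
    _ = exp (η * (μ / B)) * Nat.card (Fin r ↪ Fin n) := by
        rw [Nat.card_eq_fintype_card, mul_comm]
        simp only [μ]
        ring_nf

/-- Scalar Chernoff bound for sampling without replacement: if `0 ≤ c j ≤ B` and
`X₁,…,X_r` are sampled uniformly without replacement from `{c j}` (a uniformly
random injection `Fin r ↪ Fin n`), then with `μ = r (∑ c_j)/n`, for every `η ≥ 0`,
`P(∑ Xᵢ ≥ (1+η)μ) ≤ (e^η/(1+η)^{1+η})^{μ/B}`. -/
theorem scalar_chernoff_without_replacement
    {n : ℕ} (r : ℕ) (hn : 0 < n) (hr : r ≤ n)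
    (c : Fin n → ℝ) (B : ℝ) (hc : ∀ j, 0 ≤ c j) (hB : ∀ j, c j ≤ B)
    (η : ℝ) (hη : 0 ≤ η) :
    (Nat.card {e : Fin r ↪ Fin n //
        (1 + η) * ((r : ℝ) * (∑ j, c j) / n) ≤ ∑ i, c (e i)} : ℝ) ≤
      (Real.exp η / (1 + η) ^ (1 + η)) ^ (((r : ℝ) * (∑ j, c j) / n) / B) *
        (Nat.card (Fin r ↪ Fin n) : ℝ) :=
  scalar_chernoff_without_replacement_general r c B hc hB η hη
end

section
/- Let A ∈ ℝ^{m×n}, let Q ∈ ℝ^{m×ℓ} have orthonormal columns, and let X_opt = argmin over rank-≤k ℓ×n matrices X of ‖QᵀA − X‖_F (i.e., X_opt = (QᵀA)_k, the best rank-k approximation of QᵀA). Then Q X_opt minimizes ‖A − Q X‖_F over all rank-≤k X, and ‖A − Q X_opt‖_F² = ‖A − Q Qᵀ A‖_F² + ‖QᵀA − (QᵀA)_k‖_F². -/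
open Matrix

lemma frobSq_nonneg {m n : ℕ} (A : Matrix (Fin m) (Fin n) ℝ) :
    0 ≤ ∑ i, ∑ j, (A i j) ^ 2 :=
  Finset.sum_nonneg fun _ _ => Finset.sum_nonneg fun _ _ => sq_nonneg _

lemma frobNorm_sq {m n : ℕ} (A : Matrix (Fin m) (Fin n) ℝ) :
    frobNorm A ^ 2 = ∑ i, ∑ j, (A i j) ^ 2 :=
  Real.sq_sqrt (frobSq_nonneg A)

lemma sq_eq_trace {m n : ℕ} (M : Matrix (Fin m) (Fin n) ℝ) :
    ∑ i, ∑ j, (M i j) ^ 2 = Matrix.trace (Mᵀ * M) := by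
  simp only [Matrix.trace, Matrix.diag, Matrix.mul_apply, Matrix.transpose_apply, sq]
  rw [Finset.sum_comm]

lemma pyth {m n ℓ : ℕ} (A : Matrix (Fin m) (Fin n) ℝ) (Q : Matrix (Fin m) (Fin ℓ) ℝ)
    (hQ : Qᵀ * Q = 1) (X : Matrix (Fin ℓ) (Fin n) ℝ) :
    ∑ i, ∑ j, ((A - Q * X) i j) ^ 2 =
      (∑ i, ∑ j, ((A - Q * (Qᵀ * A)) i j) ^ 2) + ∑ i, ∑ j, ((Qᵀ * A - X) i j) ^ 2 := by
  set B := A - Q * (Qᵀ * A) with hB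
  set D := Qᵀ * A - X with hD
  have hQB : Qᵀ * B = 0 := by
    rw [hB, Matrix.mul_sub, ← Matrix.mul_assoc, hQ, Matrix.one_mul, sub_self]
  have hBQ : Bᵀ * Q = 0 := by
    have := congrArg Matrix.transpose hQB
    simpa [Matrix.transpose_mul] using this
  have hsplit : A - Q * X = B + Q * D := by
    rw [hB, hD, Matrix.mul_sub]; abel
  rw [hsplit, sq_eq_trace, sq_eq_trace, sq_eq_trace]
  have : (B + Q * D)ᵀ * (B + Q * D) = Bᵀ * B + Dᵀ * D := by
    have h1 : Dᵀ * Qᵀ * B = 0 := by rw [Matrix.mul_assoc, hQB, Matrix.mul_zero]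
    have h2 : Dᵀ * Qᵀ * Q * D = Dᵀ * D := by
      rw [Matrix.mul_assoc Dᵀ, hQ, Matrix.mul_one]
    simp only [Matrix.transpose_add, Matrix.transpose_mul, Matrix.add_mul, Matrix.mul_add,
      ← Matrix.mul_assoc, hBQ, Matrix.zero_mul, add_zero, h1, h2, zero_add]
  rw [this, Matrix.trace_add]

/-- Rank-restricted approximation within a subspace: if `Q` has orthonormal
columns and `X_opt` is a best rank-`≤ k` Frobenius approximation of `Qᵀ A`, then
`Q X_opt` minimizes `‖A − Q X‖_F` over all rank-`≤ k` matrices `X`, and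
`‖A − Q X_opt‖_F² = ‖A − Q Qᵀ A‖_F² + ‖Qᵀ A − X_opt‖_F²`. -/
theorem rank_restricted_in_subspace {m n ℓ : ℕ} (k : ℕ)
    (A : Matrix (Fin m) (Fin n) ℝ) (Q : Matrix (Fin m) (Fin ℓ) ℝ)
    (hQ : Qᵀ * Q = 1)
    (Xopt : Matrix (Fin ℓ) (Fin n) ℝ) (hXrank : Xopt.rank ≤ k)
    (hXopt : ∀ X : Matrix (Fin ℓ) (Fin n) ℝ, X.rank ≤ k →
      frobNorm (Qᵀ * A - Xopt) ≤ frobNorm (Qᵀ * A - X)) :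
    (∀ X : Matrix (Fin ℓ) (Fin n) ℝ, X.rank ≤ k →
      frobNorm (A - Q * Xopt) ≤ frobNorm (A - Q * X)) ∧
    frobNorm (A - Q * Xopt) ^ 2 =
      frobNorm (A - Q * (Qᵀ * A)) ^ 2 + frobNorm (Qᵀ * A - Xopt) ^ 2 := by
  constructor
  · intro X hX
    have h1 := hXopt X hX
    have h2 : ∑ i, ∑ j, ((Qᵀ * A - Xopt) i j) ^ 2 ≤ ∑ i, ∑ j, ((Qᵀ * A - X) i j) ^ 2 := by
      have n1 : (0:ℝ) ≤ frobNorm (Qᵀ * A - Xopt) := Real.sqrt_nonneg _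
      have n2 : (0:ℝ) ≤ frobNorm (Qᵀ * A - X) := Real.sqrt_nonneg _
      nlinarith [frobNorm_sq (Qᵀ * A - Xopt), frobNorm_sq (Qᵀ * A - X), n1, n2, h1]
    unfold frobNorm
    apply Real.sqrt_le_sqrt
    rw [pyth A Q hQ Xopt, pyth A Q hQ X]
    linarith
  · rw [frobNorm_sq, frobNorm_sq, frobNorm_sq, pyth A Q hQ Xopt]
end
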